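/- Let ‖·‖ be an arbitrary norm on ℝ², and let a, b ∈ ℝ² with ‖a − b‖ = 1. Then there exists a point x ∈ ℝ² satisfying ‖a − x‖ = 1 and ‖b − x‖ = 1; moreover, if x is such a point, then a + b − x also satisfies ‖a − (a+b−x)‖ = 1 and ‖b − (a+b−x)‖ = 1 and a + b − x ≠ x. -/

import Mathlib

/-!
Write `u = a - b`. The unit sphere `{N = 1}` is connected, being the image of the (sup-norm)
unit circle of `ℝ²` under the normalization `y ↦ y / N y`. On it, `z ↦ N (z - u)` is continuous
and takes the value `0` at `u` and `2` at `-u`, so it also takes the value `1`; then `x = a - z`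
is a common unit neighbour of `a` and `b`. Reflecting through the midpoint, `x ↦ a + b - x`,
swaps the roles of `a` and `b`, and a fixed point would be the midpoint, at distance `1/2`.
-/

/-- `N` is a norm on `ℝ²`. -/
structure IsNorm (N : ℝ × ℝ → ℝ) : Prop where
  add_le : ∀ x y : ℝ × ℝ, N (x + y) ≤ N x + N y
  smul_eq : ∀ (c : ℝ) (x : ℝ × ℝ), N (c • x) = |c| * N x
  eq_zero_of : ∀ x : ℝ × ℝ, N x = 0 → x = 0

/-- `N` is a URTC-norm: for every `a b` at `N`-distance `1`, there are exactly two
points `x` with `N (a - x) = 1` and `N (b - x) = 1`. -/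
def IsURTC (N : ℝ × ℝ → ℝ) : Prop :=
  ∀ a b : ℝ × ℝ, N (a - b) = 1 →
    {x : ℝ × ℝ | N (a - x) = 1 ∧ N (b - x) = 1}.encard = 2

namespace IsNorm

variable {N : ℝ × ℝ → ℝ} (hN : IsNorm N)
include hN

lemma map_zero : N 0 = 0 := by
  simpa using hN.smul_eq 0 0

lemma map_neg (x : ℝ × ℝ) : N (-x) = N x := by
  simpa using hN.smul_eq (-1) x

lemma map_sub_comm (x y : ℝ × ℝ) : N (x - y) = N (y - x) := by
  rw [← neg_sub, hN.map_neg]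

lemma nonneg (x : ℝ × ℝ) : 0 ≤ N x := by
  have h := hN.add_le x (-x)
  rw [add_neg_cancel, hN.map_zero, hN.map_neg] at h
  linarith

lemma pos {x : ℝ × ℝ} (hx : x ≠ 0) : 0 < N x :=
  (hN.nonneg x).lt_of_ne fun h => hx (hN.eq_zero_of x h.symm)

lemma map_smul_of_nonneg {c : ℝ} (hc : 0 ≤ c) (x : ℝ × ℝ) : N (c • x) = c * N x := by
  rw [hN.smul_eq, abs_of_nonneg hc]

lemma map_inv_smul_self {x : ℝ × ℝ} (hx : x ≠ 0) : N ((N x)⁻¹ • x) = 1 := by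
  rw [hN.map_smul_of_nonneg (inv_nonneg.2 (hN.nonneg x)), inv_mul_cancel₀ (hN.pos hx).ne']

lemma le_mul_norm (x : ℝ × ℝ) : N x ≤ (N (1, 0) + N (0, 1)) * ‖x‖ := by
  have hx : x = x.1 • ((1 : ℝ), (0 : ℝ)) + x.2 • ((0 : ℝ), (1 : ℝ)) := by
    ext <;> simp
  have h₁ : |x.1| ≤ ‖x‖ := norm_fst_le x
  have h₂ : |x.2| ≤ ‖x‖ := norm_snd_le x
  calc N x ≤ |x.1| * N (1, 0) + |x.2| * N (0, 1) := by
        conv_lhs => rw [hx]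
        rw [← hN.smul_eq, ← hN.smul_eq]
        exact hN.add_le _ _
    _ ≤ ‖x‖ * N (1, 0) + ‖x‖ * N (0, 1) := by
        gcongr
        exacts [hN.nonneg _, hN.nonneg _]
    _ = (N (1, 0) + N (0, 1)) * ‖x‖ := by ring

lemma lipschitzWith : LipschitzWith (N (1, 0) + N (0, 1)).toNNReal N := by
  refine LipschitzWith.of_dist_le' fun x y => ?_
  rw [Real.dist_eq, dist_eq_norm, abs_sub_le_iff]
  have hxy := hN.add_le (x - y) y
  have hyx := hN.add_le (y - x) x
  rw [sub_add_cancel] at hxy hyx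
  have h₁ := hN.le_mul_norm (x - y)
  rw [hN.map_sub_comm] at hyx
  constructor <;> linarith

lemma continuous : Continuous N :=
  hN.lipschitzWith.continuous

lemma isConnected_unitSphere : IsConnected {z : ℝ × ℝ | N z = 1} := by
  have hrank : 1 < Module.rank ℝ (ℝ × ℝ) := by
    rw [rank_prod', Module.rank_self, one_add_one_eq_two]
    exact Cardinal.one_lt_two
  have hsphere := isConnected_sphere hrank (0 : ℝ × ℝ) zero_le_one
  have hne : ∀ y ∈ Metric.sphere (0 : ℝ × ℝ) 1, y ≠ 0 := fun y hy =>
    ne_zero_of_mem_unit_sphere (⟨y, hy⟩ : Metric.sphere (0 : ℝ × ℝ) 1)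
  have himage : (fun y => (N y)⁻¹ • y) '' Metric.sphere 0 1 = {z | N z = 1} := by
    ext z
    refine ⟨?_, fun hz => ?_⟩
    · rintro ⟨y, hy, rfl⟩
      exact hN.map_inv_smul_self (hne y hy)
    · have hz0 : z ≠ 0 := by rintro rfl; simp [hN.map_zero] at hz
      refine ⟨‖z‖⁻¹ • z, by simp [norm_smul, hz0], ?_⟩
      dsimp only
      rw [hN.map_smul_of_nonneg (by positivity), hz, mul_one, inv_inv, smul_smul,
        mul_inv_cancel₀ (norm_ne_zero_iff.2 hz0), one_smul]
  rw [← himage]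
  refine hsphere.image _ (ContinuousOn.smul (f := fun y => (N y)⁻¹) ?_ continuousOn_id)
  exact hN.continuous.continuousOn.inv₀ fun y hy => (hN.pos (hne y hy)).ne'

lemma exists_unit_sub_eq_one {u : ℝ × ℝ} (hu : N u = 1) : ∃ z, N z = 1 ∧ N (z - u) = 1 := by
  have hNneg : N (-u) = 1 := by rw [hN.map_neg, hu]
  have h₀ : N (u - u) = 0 := by rw [sub_self, hN.map_zero]
  have h₂ : N (-u - u) = 2 := by
    rw [← neg_add', ← two_smul ℝ u, hN.map_neg, hN.map_smul_of_nonneg zero_le_two, hu, mul_one]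
  have hmem : (1 : ℝ) ∈ Set.Icc (N (u - u)) (N (-u - u)) := by
    rw [h₀, h₂]
    norm_num
  exact hN.isConnected_unitSphere.isPreconnected.intermediate_value hu hNneg
    (hN.continuous.comp (continuous_id.sub continuous_const)).continuousOn hmem

end IsNorm

/-- For any norm on `ℝ²` and `N (a - b) = 1`, a point at distance `1` from both `a`
and `b` exists; and if `x` is such a point, then so is `a + b - x`, which differs
from `x`. -/
theorem exists_unit_apex (N : ℝ × ℝ → ℝ) (hN : IsNorm N)
    (a b : ℝ × ℝ) (hab : N (a - b) = 1) :
    (∃ x : ℝ × ℝ, N (a - x) = 1 ∧ N (b - x) = 1) ∧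
      ∀ x : ℝ × ℝ, N (a - x) = 1 → N (b - x) = 1 →
        N (a - (a + b - x)) = 1 ∧ N (b - (a + b - x)) = 1 ∧ a + b - x ≠ x := by
  refine ⟨?_, fun x hax hbx => ⟨?_, ?_, ?_⟩⟩
  · obtain ⟨z, hz, hzu⟩ := hN.exists_unit_sub_eq_one hab
    refine ⟨a - z, by rwa [sub_sub_cancel], ?_⟩
    rwa [show b - (a - z) = z - (a - b) by abel]
  · rwa [show a - (a + b - x) = x - b by abel, hN.map_sub_comm]
  · rwa [show b - (a + b - x) = x - a by abel, hN.map_sub_comm]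
  · intro hfix
    have hmid : a - b = (2 : ℝ) • (a - x) := by
      linear_combination (norm := module) -hfix
    rw [hmid, hN.map_smul_of_nonneg zero_le_two, hax] at hab
    norm_num at hab
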